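/- arXiv:2310.14286 — 3 statements merged into one kernel-verified Lean document; each statement's English description precedes it below -/
import Mathlib

section
/- Let B be a real symmetric positive semidefinite d×d matrix and u ∈ ℝ^d. Then for every s ∈ ℕ and p = 2^s, one has (uᵀ B u)^p ≤ ‖u‖^{2p−2} · (uᵀ B^p u), where ‖·‖ is the Euclidean norm. -/
open MeasureTheory ProbabilityTheory Matrix
noncomputable section

/-- Euclidean norm of a vector in `ℝ^d`. -/
def euclNorm {d : ℕ} (u : Fin d → ℝ) : ℝ := Real.sqrt (∑ i, u i ^ 2)

/-! The case `p = 2` is Cauchy–Schwarz for `u` and `B u`, since `uᵀ B² u = ‖B u‖²` when `B` is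
symmetric; squaring the inequality for `p` (both sides are nonnegative as `B` is positive
semidefinite) and applying the case `p = 2` to `B^p` gives the inequality for `2p`. -/

lemma euclNorm_sq {d : ℕ} (u : Fin d → ℝ) : euclNorm u ^ 2 = u ⬝ᵥ u := by
  rw [euclNorm, Real.sq_sqrt (Finset.sum_nonneg fun i _ => sq_nonneg _)]
  simp only [dotProduct, sq]

namespace Matrix

variable {n : Type*} [Fintype n]

lemma dotProduct_sq_le_dotProduct_self_mul (u v : n → ℝ) :
    (u ⬝ᵥ v) ^ 2 ≤ (u ⬝ᵥ u) * (v ⬝ᵥ v) := by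
  simpa only [dotProduct, sq] using Finset.sum_mul_sq_le_sq_mul_sq Finset.univ u v

lemma IsSymm.dotProduct_mul_self_mulVec {B : Matrix n n ℝ} (hB : B.IsSymm) (u : n → ℝ) :
    u ⬝ᵥ (B * B) *ᵥ u = B *ᵥ u ⬝ᵥ B *ᵥ u := by
  rw [← mulVec_mulVec, dotProduct_mulVec, ← mulVec_transpose, hB.eq]

lemma IsSymm.dotProduct_mulVec_sq_le {B : Matrix n n ℝ} (hB : B.IsSymm) (u : n → ℝ) :
    (u ⬝ᵥ B *ᵥ u) ^ 2 ≤ (u ⬝ᵥ u) * (u ⬝ᵥ (B * B) *ᵥ u) := by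
  rw [hB.dotProduct_mul_self_mulVec]
  exact dotProduct_sq_le_dotProduct_self_mul u _

variable [DecidableEq n]

lemma PosSemidef.dotProduct_mulVec_pow_two_pow_le {B : Matrix n n ℝ} (hB : B.PosSemidef)
    (u : n → ℝ) (s : ℕ) :
    (u ⬝ᵥ B *ᵥ u) ^ 2 ^ s ≤ (u ⬝ᵥ u) ^ (2 ^ s - 1) * (u ⬝ᵥ (B ^ 2 ^ s) *ᵥ u) := by
  induction s with
  | zero => simp
  | succ s ih =>
    have hBu : 0 ≤ u ⬝ᵥ B *ᵥ u := by simpa using hB.dotProduct_mulVec_nonneg u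
    have hBq : (B ^ 2 ^ s).IsSymm := isHermitian_iff_isSymm.mp (hB.pow (2 ^ s)).isHermitian
    have hBB : B ^ 2 ^ s * B ^ 2 ^ s = B ^ 2 ^ (s + 1) := by rw [← pow_add, ← two_mul, pow_succ']
    have hexp : 2 ^ (s + 1) - 1 = 2 * (2 ^ s - 1) + 1 := by
      have := Nat.one_le_two_pow (n := s); rw [pow_succ]; omega
    calc (u ⬝ᵥ B *ᵥ u) ^ 2 ^ (s + 1)
        = ((u ⬝ᵥ B *ᵥ u) ^ 2 ^ s) ^ 2 := by rw [pow_succ, pow_mul]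
      _ ≤ ((u ⬝ᵥ u) ^ (2 ^ s - 1) * (u ⬝ᵥ (B ^ 2 ^ s) *ᵥ u)) ^ 2 := by gcongr
      _ = ((u ⬝ᵥ u) ^ (2 ^ s - 1)) ^ 2 * (u ⬝ᵥ (B ^ 2 ^ s) *ᵥ u) ^ 2 := mul_pow ..
      _ ≤ ((u ⬝ᵥ u) ^ (2 ^ s - 1)) ^ 2 * ((u ⬝ᵥ u) * (u ⬝ᵥ (B ^ 2 ^ s * B ^ 2 ^ s) *ᵥ u)) := by
          gcongr
          exact hBq.dotProduct_mulVec_sq_le u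
      _ = (u ⬝ᵥ u) ^ (2 ^ (s + 1) - 1) * (u ⬝ᵥ (B ^ 2 ^ (s + 1)) *ᵥ u) := by
          rw [hBB, hexp, pow_succ (u ⬝ᵥ u), pow_mul]
          ring

end Matrix

theorem stmt0_general {d : ℕ} (B : Matrix (Fin d) (Fin d) ℝ)
    (hB : B.PosSemidef) (u : Fin d → ℝ) (s : ℕ) (p : ℕ) (hp : p = 2 ^ s) :
    (u ⬝ᵥ B.mulVec u) ^ p ≤ euclNorm u ^ (2 * p - 2) * (u ⬝ᵥ (B ^ p).mulVec u) := by
  subst hp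
  rw [show 2 * 2 ^ s - 2 = 2 * (2 ^ s - 1) by omega, pow_mul, euclNorm_sq]
  exact hB.dotProduct_mulVec_pow_two_pow_le u s

/-- For a real symmetric positive semidefinite `d × d` matrix `B`,
a vector `u ∈ ℝ^d`, and `p = 2^s`, one has
`(uᵀ B u)^p ≤ ‖u‖^(2p-2) * (uᵀ B^p u)`. -/
theorem stmt0 {d : ℕ} (hd : 1 ≤ d) (B : Matrix (Fin d) (Fin d) ℝ)
    (hB : B.PosSemidef) (u : Fin d → ℝ) (s : ℕ) (p : ℕ) (hp : p = 2 ^ s) :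
    (u ⬝ᵥ B.mulVec u) ^ p ≤ euclNorm u ^ (2 * p - 2) * (u ⬝ᵥ (B ^ p).mulVec u) :=
  stmt0_general B hB u s p hp
end
end

section
/- Let B = A + Aᵀ − α Aᵀ A, where A = X (X − γY)ᵀ. Then for every step size α ∈ (0, (1−γ)/(1+γ)²], E[B] ≽ (1−γ) Σ in the Loewner order. -/
open MeasureTheory ProbabilityTheory Matrix
noncomputable section

/-- Entrywise expectation of a random matrix. -/
def matExp {d : ℕ} {Ω : Type*} [MeasurableSpace Ω] (P : Measure Ω)
    (M : Ω → Matrix (Fin d) (Fin d) ℝ) : Matrix (Fin d) (Fin d) ℝ :=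
  Matrix.of fun i j => ∫ ω, M ω i j ∂P

/-! With `a = x ⬝ X`, `b = x ⬝ Y` and `c = a - γb`, the quadratic form of `E[B]` at `x` is
`E[2ac - α‖X‖²c²]`. As `‖X‖ ≤ 1` and `α ≤ 1`, the identity
`2ac - αc² - (1-γ)a² = (1 - α(1-γ))(a² - γb²) + γ(1-α)(a-b)²`
bounds the integrand below by `(1 - α(1-γ))(a² - γb²) + (1-γ)a²`. Since `X` and `Y` are identically
distributed, `E[a²] = E[b²]`, so the first term has nonnegative expectation, and what remains,
`(1-γ)E[a²]`, is the quadratic form of `(1-γ)Σ` at `x`. -/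

lemma abs_le_euclNorm {d : ℕ} (v : Fin d → ℝ) (i : Fin d) : |v i| ≤ euclNorm v := by
  rw [euclNorm, ← Real.sqrt_sq_eq_abs]
  exact Real.sqrt_le_sqrt (Finset.single_le_sum (fun j _ => sq_nonneg (v j)) (Finset.mem_univ i))

lemma norm_le_euclNorm {d : ℕ} (v : Fin d → ℝ) : ‖v‖ ≤ euclNorm v :=
  (pi_norm_le_iff_of_nonneg (Real.sqrt_nonneg _)).2 fun i => (abs_le_euclNorm v i)

lemma dotProduct_self_le_one_of_euclNorm_le_one {d : ℕ} {v : Fin d → ℝ} (h : euclNorm v ≤ 1) :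
    v ⬝ᵥ v ≤ 1 := by
  simpa [euclNorm, dotProduct, sq] using h

lemma integrable_comp_of_ae_mem_compact {Ω E F : Type*} [MeasurableSpace Ω] {P : Measure Ω}
    [IsFiniteMeasure P] [TopologicalSpace E] [NormedAddCommGroup F] {K : Set E} (hK : IsCompact K)
    {g : E → F} (hg : Continuous g) {V : Ω → E} (hV : AEStronglyMeasurable V P)
    (hVK : ∀ᵐ ω ∂P, V ω ∈ K) : Integrable (fun ω => g (V ω)) P := by
  obtain ⟨C, hC⟩ := hK.exists_bound_of_continuousOn hg.continuousOn
  exact .of_bound (hg.comp_aestronglyMeasurable hV) C (hVK.mono fun ω h => hC _ h)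

lemma integrable_comp_prodMk_of_euclNorm_le_one {d : ℕ} {Ω : Type*} [MeasurableSpace Ω]
    {P : Measure Ω} [IsFiniteMeasure P] {X Y : Ω → Fin d → ℝ} (hXm : Measurable X)
    (hYm : Measurable Y) (hX1 : ∀ᵐ ω ∂P, euclNorm (X ω) ≤ 1) (hY1 : ∀ᵐ ω ∂P, euclNorm (Y ω) ≤ 1)
    {g : (Fin d → ℝ) × (Fin d → ℝ) → ℝ} (hg : Continuous g) :
    Integrable (fun ω => g (X ω, Y ω)) P := by
  refine integrable_comp_of_ae_mem_compact (isCompact_closedBall 0 1) hg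
    (hXm.prodMk hYm).aestronglyMeasurable ?_
  filter_upwards [hX1, hY1] with ω hX hY
  exact mem_closedBall_zero_iff.2 (norm_prod_le_iff.2
    ⟨(norm_le_euclNorm _).trans hX, (norm_le_euclNorm _).trans hY⟩)

section matExp

variable {d : ℕ} {Ω : Type*} [MeasurableSpace Ω] {P : Measure Ω}

lemma isHermitian_matExp {F : Ω → Matrix (Fin d) (Fin d) ℝ} (hF : ∀ ω, (F ω).IsHermitian) :
    (matExp P F).IsHermitian := by
  ext i j
  simp only [conjTranspose_apply, star_trivial, matExp, of_apply]
  exact integral_congr_ae (ae_of_all P fun ω => (hF ω).apply i j)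

lemma dotProduct_matExp_mulVec {F : Ω → Matrix (Fin d) (Fin d) ℝ}
    (hF : ∀ i j, Integrable (fun ω => F ω i j) P) (x : Fin d → ℝ) :
    x ⬝ᵥ matExp P F *ᵥ x = ∫ ω, x ⬝ᵥ F ω *ᵥ x ∂P := by
  simp only [dotProduct, mulVec, matExp, of_apply]
  rw [integral_finsetSum _ fun i _ =>
    (integrable_finsetSum _ fun j _ => (hF i j).mul_const (x j)).const_mul (x i)]
  refine Finset.sum_congr rfl fun i _ => ?_
  rw [integral_const_mul, integral_finsetSum _ fun j _ => (hF i j).mul_const (x j)]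
  simp only [integral_mul_const]

end matExp

section quadraticForm

variable {n R : Type*} [Fintype n] [CommRing R]

lemma dotProduct_vecMulVec_mulVec (x u v : n → R) :
    x ⬝ᵥ vecMulVec u v *ᵥ x = (x ⬝ᵥ u) * (x ⬝ᵥ v) := by
  rw [vecMulVec_mulVec, dotProduct_comm v, op_smul_eq_smul, dotProduct_smul, smul_eq_mul, mul_comm]

lemma dotProduct_transpose_mul_self_mulVec (A : Matrix n n R) (x : n → R) :
    x ⬝ᵥ (Aᵀ * A) *ᵥ x = A *ᵥ x ⬝ᵥ A *ᵥ x := by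
  rw [← mulVec_mulVec, dotProduct_mulVec, vecMul_transpose]

lemma dotProduct_add_transpose_sub_smul_transpose_mul_self_mulVec (α : R) (u v x : n → R) :
    x ⬝ᵥ (vecMulVec u v + (vecMulVec u v)ᵀ - α • ((vecMulVec u v)ᵀ * vecMulVec u v)) *ᵥ x
      = 2 * ((x ⬝ᵥ u) * (x ⬝ᵥ v)) - α * ((u ⬝ᵥ u) * (x ⬝ᵥ v) ^ 2) := by
  rw [sub_mulVec, add_mulVec, smul_mulVec, dotProduct_sub, dotProduct_add, dotProduct_smul,
    dotProduct_transpose_mul_self_mulVec, transpose_vecMulVec, dotProduct_vecMulVec_mulVec,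
    dotProduct_vecMulVec_mulVec, vecMulVec_mulVec, op_smul_eq_smul, dotProduct_smul,
    smul_dotProduct, smul_eq_mul, smul_eq_mul, dotProduct_comm v]
  ring

end quadraticForm

section hermitian

variable {n R : Type*} [CommRing R] [StarRing R] [TrivialStar R]

lemma isHermitian_add_transpose_sub_smul_transpose_mul_self [Fintype n] (α : R)
    (A : Matrix n n R) : (A + Aᵀ - α • (Aᵀ * A)).IsHermitian := by
  rw [IsHermitian, conjTranspose_eq_transpose_of_trivial, transpose_sub, transpose_add,
    transpose_smul, transpose_mul, transpose_transpose, add_comm Aᵀ]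

lemma isHermitian_vecMulVec_self (u : n → R) : (vecMulVec u u).IsHermitian := by
  rw [IsHermitian, conjTranspose_eq_transpose_of_trivial, transpose_vecMulVec]

end hermitian

lemma one_sub_mul_integral_sq_le_integral {Ω : Type*} [MeasurableSpace Ω] {P : Measure Ω}
    {a b s : Ω → ℝ} {γ α : ℝ} (hγ : 0 ≤ γ) (hγ1 : γ ≤ 1) (hα : 0 ≤ α) (hα1 : α ≤ 1)
    (hs : ∀ᵐ ω ∂P, s ω ≤ 1)
    (ha : Integrable (fun ω => a ω ^ 2) P) (hb : Integrable (fun ω => b ω ^ 2) P)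
    (hq : Integrable (fun ω => 2 * (a ω * (a ω - γ * b ω)) - α * (s ω * (a ω - γ * b ω) ^ 2)) P)
    (hab : ∫ ω, b ω ^ 2 ∂P ≤ ∫ ω, a ω ^ 2 ∂P) :
    (1 - γ) * ∫ ω, a ω ^ 2 ∂P
      ≤ ∫ ω, 2 * (a ω * (a ω - γ * b ω)) - α * (s ω * (a ω - γ * b ω) ^ 2) ∂P := by
  have hκ : 0 ≤ 1 - α * (1 - γ) := by nlinarith
  have ha0 : 0 ≤ ∫ ω, a ω ^ 2 ∂P := integral_nonneg fun ω => sq_nonneg _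
  have hdiff : Integrable (fun ω => a ω ^ 2 - γ * b ω ^ 2) P := ha.sub (hb.const_mul γ)
  calc (1 - γ) * ∫ ω, a ω ^ 2 ∂P
      ≤ (1 - α * (1 - γ)) * (∫ ω, a ω ^ 2 ∂P - γ * ∫ ω, b ω ^ 2 ∂P)
          + (1 - γ) * ∫ ω, a ω ^ 2 ∂P := by
        have : γ * ∫ ω, b ω ^ 2 ∂P ≤ ∫ ω, a ω ^ 2 ∂P := by nlinarith
        nlinarith [mul_nonneg hκ (sub_nonneg.2 this)]
    _ = ∫ ω, (1 - α * (1 - γ)) * (a ω ^ 2 - γ * b ω ^ 2) + (1 - γ) * a ω ^ 2 ∂P := by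
        rw [integral_add (hdiff.const_mul _) (ha.const_mul _), integral_const_mul,
          integral_const_mul, integral_sub ha (hb.const_mul γ), integral_const_mul]
    _ ≤ _ := by
        refine integral_mono_ae ((hdiff.const_mul _).add (ha.const_mul _)) hq ?_
        filter_upwards [hs] with ω hsω
        nlinarith [mul_nonneg (mul_nonneg hγ (sub_nonneg.2 hα1)) (sq_nonneg (a ω - b ω)),
          mul_nonneg (mul_nonneg hα (sub_nonneg.2 hsω)) (sq_nonneg (a ω - γ * b ω))]

theorem stmt3_general {d : ℕ} (γ : ℝ) (hγ : γ ∈ Set.Ico (0 : ℝ) 1)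
    {Ω : Type*} [MeasurableSpace Ω] (P : Measure Ω) [IsProbabilityMeasure P]
    (X Y : Ω → Fin d → ℝ) (hXm : Measurable X) (hYm : Measurable Y)
    (hX1 : ∀ᵐ ω ∂P, euclNorm (X ω) ≤ 1) (hY1 : ∀ᵐ ω ∂P, euclNorm (Y ω) ≤ 1)
    (hXY : IdentDistrib X Y P P)
    (α : ℝ) (hα : α ∈ Set.Ioc 0 ((1 - γ) / (1 + γ) ^ 2)) :
    (matExp P (fun ω =>
        vecMulVec (X ω) (X ω - γ • Y ω) + (vecMulVec (X ω) (X ω - γ • Y ω))ᵀ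
          - α • ((vecMulVec (X ω) (X ω - γ • Y ω))ᵀ * vecMulVec (X ω) (X ω - γ • Y ω)))
      - (1 - γ) • matExp P (fun ω => vecMulVec (X ω) (X ω))).PosSemidef := by
  obtain ⟨hγ0, hγ1⟩ := hγ
  obtain ⟨hα0, hα⟩ := hα
  have hα1 : α ≤ 1 := by
    have := (le_div_iff₀ (by positivity : (0 : ℝ) < (1 + γ) ^ 2)).1 hα
    nlinarith [mul_nonneg hα0.le (by positivity : 0 ≤ γ * (2 + γ))]
  have hint {g : (Fin d → ℝ) × (Fin d → ℝ) → ℝ} (hg : Continuous g) :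
      Integrable (fun ω => g (X ω, Y ω)) P :=
    integrable_comp_prodMk_of_euclNorm_le_one hXm hYm hX1 hY1 hg
  refine posSemidef_iff_dotProduct_mulVec.2 ⟨(isHermitian_matExp fun ω =>
      isHermitian_add_transpose_sub_smul_transpose_mul_self _ _).sub
      ((isHermitian_matExp fun ω => isHermitian_vecMulVec_self _).smul rfl), fun x => ?_⟩
  rw [star_trivial, sub_mulVec, smul_mulVec, dotProduct_sub, dotProduct_smul, smul_eq_mul,
    sub_nonneg, dotProduct_matExp_mulVec fun i j => hint (g := fun p => vecMulVec p.1 p.1 i j)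
      (by fun_prop),
    dotProduct_matExp_mulVec fun i j => hint (g := fun p => (vecMulVec p.1 (p.1 - γ • p.2)
      + (vecMulVec p.1 (p.1 - γ • p.2))ᵀ - α • ((vecMulVec p.1 (p.1 - γ • p.2))ᵀ
      * vecMulVec p.1 (p.1 - γ • p.2))) i j) (by fun_prop)]
  simp only [dotProduct_add_transpose_sub_smul_transpose_mul_self_mulVec,
    dotProduct_vecMulVec_mulVec, dotProduct_sub, dotProduct_smul, smul_eq_mul, ← sq]
  refine one_sub_mul_integral_sq_le_integral hγ0 hγ1.le hα0.le hα1
    (hX1.mono fun ω h => dotProduct_self_le_one_of_euclNorm_le_one h)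
    (hint (g := fun p => (x ⬝ᵥ p.1) ^ 2) (by fun_prop))
    (hint (g := fun p => (x ⬝ᵥ p.2) ^ 2) (by fun_prop))
    (hint (g := fun p => 2 * (x ⬝ᵥ p.1 * (x ⬝ᵥ p.1 - γ * x ⬝ᵥ p.2))
      - α * (p.1 ⬝ᵥ p.1 * (x ⬝ᵥ p.1 - γ * x ⬝ᵥ p.2) ^ 2)) (by fun_prop)) ?_
  exact ((hXY.comp (by fun_prop : Measurable fun v => (x ⬝ᵥ v) ^ 2)).integral_eq).ge

/-- Let `A = X (X - γ Y)ᵀ` and `B = A + Aᵀ - α Aᵀ A`. For every step size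
`α ∈ (0, (1-γ)/(1+γ)²]`, `E[B] ≽ (1-γ) Σ` in the Loewner order, where `Σ = E[X Xᵀ]`. -/
theorem stmt3 {d : ℕ} (hd : 1 ≤ d) (γ : ℝ) (hγ : γ ∈ Set.Ico (0 : ℝ) 1)
    {Ω : Type*} [MeasurableSpace Ω] (P : Measure Ω) [IsProbabilityMeasure P]
    (X Y : Ω → Fin d → ℝ) (hXm : Measurable X) (hYm : Measurable Y)
    (hX1 : ∀ᵐ ω ∂P, euclNorm (X ω) ≤ 1) (hY1 : ∀ᵐ ω ∂P, euclNorm (Y ω) ≤ 1)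
    (hXY : IdentDistrib X Y P P)
    (α : ℝ) (hα : α ∈ Set.Ioc 0 ((1 - γ) / (1 + γ) ^ 2)) :
    (matExp P (fun ω =>
        vecMulVec (X ω) (X ω - γ • Y ω) + (vecMulVec (X ω) (X ω - γ • Y ω))ᵀ
          - α • ((vecMulVec (X ω) (X ω - γ • Y ω))ᵀ * vecMulVec (X ω) (X ω - γ • Y ω)))
      - (1 - γ) • matExp P (fun ω => vecMulVec (X ω) (X ω))).PosSemidef :=
  stmt3_general γ hγ P X Y hXm hYm hX1 hY1 hXY α hα
end
end

section
/- Assume Σ = E[X Xᵀ] is positive definite. Then the operator norm bound ‖Σ^{−1/2} E[X Yᵀ] Σ^{−1/2}‖ ≤ 1 holds, and consequently, with Ā = E[X (X − γY)ᵀ], ‖Σ^{−1/2} Ā Σ^{−1/2}‖ ≤ 1 + γ. -/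
/-!
Let `R = Σ^{-1/2}`, which is symmetric with `R Σ R = 1`. Pointwise `2 (b⬝X)(a⬝Y) ≤ (b⬝X)² + (a⬝Y)²`;
taking expectations and using that `X` and `Y` have the same second moment matrix `Σ` gives
`2 bᵀ E[X Yᵀ] a ≤ aᵀ Σ a + bᵀ Σ b`. With `a = R u`, `b = R v` this becomes
`2 vᵀ (R E[X Yᵀ] R) u ≤ |u|² + |v|²`, and choosing `v = R E[X Yᵀ] R u` bounds the operator norm
by `1`. Finally `Ā = Σ - γ E[X Yᵀ]`, so `R Ā R = 1 - γ R E[X Yᵀ] R` has norm at most `1 + γ`.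
-/

open MeasureTheory ProbabilityTheory Matrix
noncomputable section

/-- The `ℓ²`-operator norm of a real `d × d` matrix. -/
def opNorm {d : ℕ} (M : Matrix (Fin d) (Fin d) ℝ) : ℝ :=
  ‖Matrix.toEuclideanCLM (𝕜 := ℝ) M‖

/-- The square root of a positive semidefinite matrix, as `Matrix.PosSemidef.sqrt` was defined
in Mathlib (Dec 2024); that definition has since been removed from Mathlib. -/
def Matrix.PosSemidef.sqrt {n : Type*} [Fintype n] [DecidableEq n] {A : Matrix n n ℝ}
    (hA : A.PosSemidef) : Matrix n n ℝ :=
  hA.1.eigenvectorUnitary.1 * diagonal ((↑) ∘ (√·) ∘ hA.1.eigenvalues) *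
    (star hA.1.eigenvectorUnitary : Matrix n n ℝ)

namespace Matrix

lemma dotProduct_mul_dotProduct {m n α : Type*} [Fintype m] [Fintype n] [CommSemiring α]
    (a w : n → α) (b z : m → α) :
    (b ⬝ᵥ z) * (a ⬝ᵥ w) = ∑ i, ∑ j, b i * a j * (z i * w j) := by
  simp only [dotProduct, Finset.sum_mul_sum]
  exact Finset.sum_congr rfl fun i _ => Finset.sum_congr rfl fun j _ => by ring

section Whitening

variable {n : Type*} [Fintype n]

lemma dotProduct_mul_mul_mulVec {R : Matrix n n ℝ} (hR : Rᵀ = R) (M : Matrix n n ℝ)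
    (u v : n → ℝ) :
    v ⬝ᵥ (R * M * R) *ᵥ u = (R *ᵥ v) ⬝ᵥ M *ᵥ (R *ᵥ u) := by
  rw [← mulVec_mulVec, ← mulVec_mulVec, dotProduct_mulVec v R, ← mulVec_transpose, hR]

variable [DecidableEq n]

lemma PosSemidef.transpose_sqrt {A : Matrix n n ℝ} (hA : A.PosSemidef) : hA.sqrtᵀ = hA.sqrt := by
  simp only [PosSemidef.sqrt, transpose_mul, star_eq_conjTranspose,
    conjTranspose_eq_transpose_of_trivial, transpose_transpose, diagonal_transpose,
    Matrix.mul_assoc]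

lemma PosSemidef.sqrt_mul_sqrt {A : Matrix n n ℝ} (hA : A.PosSemidef) : hA.sqrt * hA.sqrt = A := by
  conv_rhs => rw [hA.1.spectral_theorem, Unitary.conjStarAlgAut_apply]
  simp only [PosSemidef.sqrt, Matrix.mul_assoc]
  rw [← Matrix.mul_assoc (star _ : Matrix _ _ ℝ), Unitary.coe_star_mul_self, Matrix.one_mul,
    ← Matrix.mul_assoc (diagonal _), diagonal_mul_diagonal]
  congr 3
  funext i
  simp [Real.mul_self_sqrt (hA.eigenvalues_nonneg i)]

lemma PosDef.transpose_inv_sqrt {A : Matrix n n ℝ} (hA : A.PosDef) :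
    hA.posSemidef.sqrt⁻¹ᵀ = hA.posSemidef.sqrt⁻¹ := by
  rw [transpose_nonsing_inv, hA.posSemidef.transpose_sqrt]

lemma PosDef.inv_sqrt_mul_self_mul_inv_sqrt {A : Matrix n n ℝ} (hA : A.PosDef) :
    hA.posSemidef.sqrt⁻¹ * A * hA.posSemidef.sqrt⁻¹ = 1 := by
  have hQQ := hA.posSemidef.sqrt_mul_sqrt
  set Q := hA.posSemidef.sqrt
  have hQ : IsUnit Q.det := isUnit_of_mul_isUnit_left (y := Q.det) <| by
    rw [← det_mul, hQQ]
    exact (isUnit_iff_isUnit_det A).mp hA.isUnit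
  calc Q⁻¹ * A * Q⁻¹ = (Q⁻¹ * Q) * (Q * Q⁻¹) := by rw [← hQQ]; simp only [Matrix.mul_assoc]
    _ = 1 := by rw [nonsing_inv_mul Q hQ, mul_nonsing_inv Q hQ, Matrix.one_mul]

lemma two_mul_dotProduct_mul_mul_mulVec_le {R S M : Matrix n n ℝ} (hR : Rᵀ = R)
    (hRSR : R * S * R = 1) (h : ∀ a b, 2 * (b ⬝ᵥ M *ᵥ a) ≤ a ⬝ᵥ S *ᵥ a + b ⬝ᵥ S *ᵥ b)
    (u v : n → ℝ) : 2 * (v ⬝ᵥ (R * M * R) *ᵥ u) ≤ u ⬝ᵥ u + v ⬝ᵥ v := by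
  have hS (w : n → ℝ) : (R *ᵥ w) ⬝ᵥ S *ᵥ (R *ᵥ w) = w ⬝ᵥ w := by
    rw [← dotProduct_mul_mul_mulVec hR, hRSR, one_mulVec]
  rw [dotProduct_mul_mul_mulVec hR, ← hS u, ← hS v]
  exact h _ _

end Whitening

end Matrix

section OperatorNorm

variable {d : ℕ}

lemma opNorm_le_one_of_two_mul_dotProduct_mulVec_le (M : Matrix (Fin d) (Fin d) ℝ)
    (h : ∀ u v : Fin d → ℝ, 2 * (v ⬝ᵥ M *ᵥ u) ≤ u ⬝ᵥ u + v ⬝ᵥ v) : opNorm M ≤ 1 := by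
  refine ContinuousLinearMap.opNorm_le_bound _ zero_le_one fun x => ?_
  have hnorm (z : EuclideanSpace ℝ (Fin d)) : ‖z‖ ^ 2 = z.ofLp ⬝ᵥ z.ofLp := by
    rw [← real_inner_self_eq_norm_sq, EuclideanSpace.inner_eq_star_dotProduct, star_trivial]
  set y := toEuclideanCLM (𝕜 := ℝ) M x
  have hy : ‖y‖ ^ 2 ≤ ‖x‖ ^ 2 := by
    have := h x.ofLp y.ofLp
    rw [← ofLp_toEuclideanCLM, ← hnorm, ← hnorm] at this
    linarith
  rw [one_mul]
  exact (pow_le_pow_iff_left₀ (norm_nonneg _) (norm_nonneg _) two_ne_zero).mp hy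

lemma opNorm_one_sub_smul_le (N : Matrix (Fin d) (Fin d) ℝ) {γ : ℝ} (hγ : 0 ≤ γ) :
    opNorm (1 - γ • N) ≤ 1 + γ * opNorm N := by
  unfold opNorm
  rw [map_sub, map_one, map_smul]
  calc _ ≤ ‖(1 : EuclideanSpace ℝ (Fin d) →L[ℝ] _)‖ + ‖γ • toEuclideanCLM (𝕜 := ℝ) N‖ :=
        norm_sub_le _ _
    _ ≤ 1 + γ * ‖toEuclideanCLM (𝕜 := ℝ) N‖ := by
        rw [norm_smul, Real.norm_of_nonneg hγ]
        gcongr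
        exact ContinuousLinearMap.norm_id_le

end OperatorNorm

section SecondMoments

variable {d : ℕ} {Ω : Type*} [MeasurableSpace Ω] {P : Measure Ω} {X Y Z W : Ω → Fin d → ℝ}

lemma abs_apply_le_euclNorm (u : Fin d → ℝ) (i : Fin d) : |u i| ≤ euclNorm u :=
  Real.abs_le_sqrt <| Finset.single_le_sum (f := fun j => u j ^ 2) (fun _ _ => sq_nonneg _)
    (Finset.mem_univ i)

lemma integrable_apply_mul_apply [IsFiniteMeasure P] (hZ : Measurable Z) (hW : Measurable W)
    (hZ1 : ∀ᵐ ω ∂P, euclNorm (Z ω) ≤ 1) (hW1 : ∀ᵐ ω ∂P, euclNorm (W ω) ≤ 1) (i j : Fin d) :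
    Integrable (fun ω => Z ω i * W ω j) P := by
  refine Integrable.mono' (integrable_const 1) (by fun_prop) ?_
  filter_upwards [hZ1, hW1] with ω hZω hWω
  rw [Real.norm_eq_abs, abs_mul]
  exact mul_le_one₀ ((abs_apply_le_euclNorm _ i).trans hZω) (abs_nonneg _)
    ((abs_apply_le_euclNorm _ j).trans hWω)

lemma integrable_dotProduct_mul_dotProduct (h : ∀ i j, Integrable (fun ω => Z ω i * W ω j) P)
    (a b : Fin d → ℝ) : Integrable (fun ω => (b ⬝ᵥ Z ω) * (a ⬝ᵥ W ω)) P := by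
  simp only [dotProduct_mul_dotProduct]
  exact integrable_finsetSum _ fun i _ => integrable_finsetSum _ fun j _ => (h i j).const_mul _

lemma integral_dotProduct_mul_dotProduct (h : ∀ i j, Integrable (fun ω => Z ω i * W ω j) P)
    (a b : Fin d → ℝ) :
    ∫ ω, (b ⬝ᵥ Z ω) * (a ⬝ᵥ W ω) ∂P = b ⬝ᵥ matExp P (fun ω => vecMulVec (Z ω) (W ω)) *ᵥ a := by
  simp only [dotProduct_mul_dotProduct]
  rw [integral_finsetSum _ fun i _ => integrable_finsetSum _ fun j _ => (h i j).const_mul _]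
  have hrow (i : Fin d) : ∫ ω, ∑ j, b i * a j * (Z ω i * W ω j) ∂P =
      ∑ j, b i * a j * ∫ ω, Z ω i * W ω j ∂P := by
    rw [integral_finsetSum _ fun j _ => (h i j).const_mul _]
    simp only [integral_const_mul]
  simp only [hrow, matExp, mulVec, dotProduct, of_apply, vecMulVec_apply, Finset.mul_sum]
  exact Finset.sum_congr rfl fun i _ => Finset.sum_congr rfl fun j _ => by ring

lemma two_mul_dotProduct_matExp_mulVec_le (hXX : ∀ i j, Integrable (fun ω => X ω i * X ω j) P)
    (hXY : ∀ i j, Integrable (fun ω => X ω i * Y ω j) P)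
    (hYY : ∀ i j, Integrable (fun ω => Y ω i * Y ω j) P) (a b : Fin d → ℝ) :
    2 * (b ⬝ᵥ matExp P (fun ω => vecMulVec (X ω) (Y ω)) *ᵥ a) ≤
      a ⬝ᵥ matExp P (fun ω => vecMulVec (Y ω) (Y ω)) *ᵥ a +
        b ⬝ᵥ matExp P (fun ω => vecMulVec (X ω) (X ω)) *ᵥ b := by
  rw [← integral_dotProduct_mul_dotProduct hXY, ← integral_dotProduct_mul_dotProduct hYY,
    ← integral_dotProduct_mul_dotProduct hXX, ← integral_const_mul,
    ← integral_add (integrable_dotProduct_mul_dotProduct hYY a a)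
      (integrable_dotProduct_mul_dotProduct hXX b b)]
  refine integral_mono ((integrable_dotProduct_mul_dotProduct hXY a b).const_mul 2)
    ((integrable_dotProduct_mul_dotProduct hYY a a).add
      (integrable_dotProduct_mul_dotProduct hXX b b)) fun ω => ?_
  nlinarith [sq_nonneg (b ⬝ᵥ X ω - a ⬝ᵥ Y ω)]

lemma matExp_vecMulVec_sub_smul (hXX : ∀ i j, Integrable (fun ω => X ω i * X ω j) P)
    (hXY : ∀ i j, Integrable (fun ω => X ω i * Y ω j) P) (γ : ℝ) :
    matExp P (fun ω => vecMulVec (X ω) (X ω - γ • Y ω)) =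
      matExp P (fun ω => vecMulVec (X ω) (X ω)) -
        γ • matExp P (fun ω => vecMulVec (X ω) (Y ω)) := by
  ext i j
  simp only [matExp, of_apply, vecMulVec_apply, Matrix.sub_apply, Matrix.smul_apply, Pi.sub_apply,
    Pi.smul_apply, smul_eq_mul, mul_sub, mul_left_comm (X _ i) γ]
  rw [integral_sub (hXX i j) ((hXY i j).const_mul γ), integral_const_mul]

lemma ProbabilityTheory.IdentDistrib.matExp_vecMulVec_self_eq {Ω' : Type*}
    [MeasurableSpace Ω'] {P' : Measure Ω'} {Y' : Ω' → Fin d → ℝ} (hXY : IdentDistrib X Y' P P') :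
    matExp P' (fun ω => vecMulVec (Y' ω) (Y' ω)) = matExp P (fun ω => vecMulVec (X ω) (X ω)) := by
  ext i j
  exact (hXY.comp (u := fun u : Fin d → ℝ => u i * u j) (by fun_prop)).integral_eq.symm

end SecondMoments

theorem stmt17_general {d : ℕ} (γ : ℝ) (hγ : γ ∈ Set.Ico (0 : ℝ) 1)
    {Ω : Type*} [MeasurableSpace Ω] (P : Measure Ω) [IsProbabilityMeasure P]
    (X Y : Ω → Fin d → ℝ) (hXm : Measurable X) (hYm : Measurable Y)
    (hX1 : ∀ᵐ ω ∂P, euclNorm (X ω) ≤ 1) (hY1 : ∀ᵐ ω ∂P, euclNorm (Y ω) ≤ 1)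
    (hXY : IdentDistrib X Y P P)
    (Sig : Matrix (Fin d) (Fin d) ℝ)
    (hSig : Sig = matExp P (fun ω => vecMulVec (X ω) (X ω))) (hpd : Sig.PosDef)
    (Abar : Matrix (Fin d) (Fin d) ℝ)
    (hAbar : Abar = matExp P (fun ω => vecMulVec (X ω) (X ω - γ • Y ω))) :
    opNorm (hpd.posSemidef.sqrt⁻¹ * matExp P (fun ω => vecMulVec (X ω) (Y ω))
        * hpd.posSemidef.sqrt⁻¹) ≤ 1 ∧
      opNorm (hpd.posSemidef.sqrt⁻¹ * Abar * hpd.posSemidef.sqrt⁻¹) ≤ 1 + γ := by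
  set R := hpd.posSemidef.sqrt⁻¹
  set E := matExp P (fun ω => vecMulVec (X ω) (Y ω))
  have hintXX := integrable_apply_mul_apply hXm hXm hX1 hX1
  have hintXY := integrable_apply_mul_apply hXm hYm hX1 hY1
  have hRSR : R * Sig * R = 1 := hpd.inv_sqrt_mul_self_mul_inv_sqrt
  have hE : opNorm (R * E * R) ≤ 1 := by
    refine opNorm_le_one_of_two_mul_dotProduct_mulVec_le _
      (two_mul_dotProduct_mul_mul_mulVec_le hpd.transpose_inv_sqrt hRSR fun a b => ?_)
    have := two_mul_dotProduct_matExp_mulVec_le hintXX hintXY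
      (integrable_apply_mul_apply hYm hYm hY1 hY1) a b
    rwa [hXY.matExp_vecMulVec_self_eq, ← hSig] at this
  have hA : R * Abar * R = 1 - γ • (R * E * R) := by
    rw [hAbar, matExp_vecMulVec_sub_smul hintXX hintXY, ← hSig, Matrix.mul_sub, Matrix.sub_mul,
      hRSR, Matrix.mul_smul, Matrix.smul_mul]
  refine ⟨hE, ?_⟩
  rw [hA]
  calc _ ≤ 1 + γ * opNorm (R * E * R) := opNorm_one_sub_smul_le _ hγ.1
    _ ≤ 1 + γ := by nlinarith [hγ.1]

/-- If `Σ = E[X Xᵀ]` is positive definite, then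
`‖Σ^{-1/2} E[X Yᵀ] Σ^{-1/2}‖ ≤ 1` (operator norm) and, with `Ā = E[X (X - γY)ᵀ]`,
`‖Σ^{-1/2} Ā Σ^{-1/2}‖ ≤ 1 + γ`. -/
theorem stmt17 {d : ℕ} (hd : 1 ≤ d) (γ : ℝ) (hγ : γ ∈ Set.Ico (0 : ℝ) 1)
    {Ω : Type*} [MeasurableSpace Ω] (P : Measure Ω) [IsProbabilityMeasure P]
    (X Y : Ω → Fin d → ℝ) (hXm : Measurable X) (hYm : Measurable Y)
    (hX1 : ∀ᵐ ω ∂P, euclNorm (X ω) ≤ 1) (hY1 : ∀ᵐ ω ∂P, euclNorm (Y ω) ≤ 1)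
    (hXY : IdentDistrib X Y P P)
    (Sig : Matrix (Fin d) (Fin d) ℝ)
    (hSig : Sig = matExp P (fun ω => vecMulVec (X ω) (X ω))) (hpd : Sig.PosDef)
    (Abar : Matrix (Fin d) (Fin d) ℝ)
    (hAbar : Abar = matExp P (fun ω => vecMulVec (X ω) (X ω - γ • Y ω))) :
    opNorm (hpd.posSemidef.sqrt⁻¹ * matExp P (fun ω => vecMulVec (X ω) (Y ω))
        * hpd.posSemidef.sqrt⁻¹) ≤ 1 ∧
      opNorm (hpd.posSemidef.sqrt⁻¹ * Abar * hpd.posSemidef.sqrt⁻¹) ≤ 1 + γ :=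
  stmt17_general γ hγ P X Y hXm hYm hX1 hY1 hXY Sig hSig hpd Abar hAbar
end
end
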